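/- Let Z be discrete with finitely many positive-probability levels, π ∈ (0,1), γ₀, γ₁ ∈ R^d, and define σ²_SL = Σ_z P(Z=z)[π·Var(O_{z1}|Z=z) + (1−π)·Var(O_{z0}|Z=z)] and σ²_CSL = σ²_SL − π(1−π)(γ₁+γ₀)^T E[Var(X|Z)] (γ₁+γ₀), where γ_j = (E[Var(X|Z)])^{-1} E[Cov(X, O_{zj} | Z)] and E[Var(X|Z)] is positive definite. Then σ²_CSL ≤ σ²_SL, with equality if and only if γ₁ + γ₀ = 0, and moreover σ²_CSL = Σ_z P(Z=z)[π·Var(O_{z1} − X^Tγ₁|Z=z) + (1−π)·Var(O_{z0} − X^Tγ₀|Z=z)] + (πγ₁−(1−π)γ₀)^T E[Var(X|Z)](πγ₁−(1−π)γ₀). -/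

import Mathlib

open MeasureTheory ProbabilityTheory Filter Matrix Set
open scoped BigOperators NNReal Topology ProbabilityTheory

noncomputable def evar {Ω : Type*} [MeasurableSpace Ω] (μ : Measure Ω) (f : Ω → ℝ) : ℝ :=
  ∫ ω, (f ω - ∫ x, f x ∂μ) ^ 2 ∂μ

noncomputable def ecov {Ω : Type*} [MeasurableSpace Ω] (μ : Measure Ω) (f g : Ω → ℝ) : ℝ :=
  ∫ ω, (f ω - ∫ x, f x ∂μ) * (g ω - ∫ x, g x ∂μ) ∂μ

noncomputable def covVec {Ω : Type*} [MeasurableSpace Ω] (μ : Measure Ω) {d : ℕ}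
    (X : Ω → Fin d → ℝ) (f : Ω → ℝ) : Fin d → ℝ :=
  fun k => ecov μ (fun ω => X ω k) f

noncomputable def covMat {Ω : Type*} [MeasurableSpace Ω] (μ : Measure Ω) {d : ℕ}
    (X : Ω → Fin d → ℝ) : Matrix (Fin d) (Fin d) ℝ :=
  Matrix.of fun k l => ecov μ (fun ω => X ω k) (fun ω => X ω l)

/-! Within one stratum, `Var(O - Xᵀγ) = Var O - 2 γᵀ Cov(X, O) + γᵀ Var(X) γ`. Averaging over the
strata and using the normal equations `A γⱼ = E[Cov(X, O_{zj} | Z)]`, the adjusted within-stratum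
variance of arm `j` is the unadjusted one minus `γⱼᵀ A γⱼ`. The decomposition of `σ²_CSL` is then the
identity `π q(γ₁) + (1-π) q(γ₀) - π(1-π) q(γ₁+γ₀) = q(πγ₁ - (1-π)γ₀)` for the quadratic form `q`
of the symmetric matrix `A`, and the inequality with its equality case is positive definiteness
of `A`. -/

section Covariance

variable {Ω : Type*} [MeasurableSpace Ω]

lemma MeasureTheory.MemLp.cond {E : Type*} [NormedAddCommGroup E] {μ : Measure Ω} {f : Ω → E}
    {p : ENNReal} (hf : MemLp f p μ) (s : Set Ω) : MemLp f p μ[|s] := by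
  by_cases hs : μ s = 0
  · simp [cond_eq_zero_of_meas_eq_zero hs]
  · exact (hf.restrict s).smul_measure (ENNReal.inv_ne_top.mpr hs)

variable {ν : Measure Ω}

lemma ecov_eq_covariance (f g : Ω → ℝ) : ecov ν f g = cov[f, g; ν] := rfl

lemma evar_eq_covariance (f : Ω → ℝ) : evar ν f = cov[f, f; ν] := by
  simp only [evar, covariance, pow_two]

variable [IsFiniteMeasure ν] {d : ℕ}

lemma evar_sub_sum_mul (O : Ω → ℝ) (X : Ω → Fin d → ℝ) (γ : Fin d → ℝ) (hO : MemLp O 2 ν)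
    (hX : ∀ k, MemLp (fun ω => X ω k) 2 ν) :
    evar ν (fun ω => O ω - ∑ k, X ω k * γ k)
      = evar ν O - 2 * (γ ⬝ᵥ covVec ν X O) + γ ⬝ᵥ covMat ν X *ᵥ γ := by
  have hXγ : ∀ k, MemLp (fun ω => X ω k * γ k) 2 ν := fun k => (hX k).mul_const (γ k)
  have hL : MemLp (fun ω => ∑ k, X ω k * γ k) 2 ν := memLp_finsetSum _ fun k _ => hXγ k
  have hLO : cov[fun ω => ∑ k, X ω k * γ k, O; ν] = γ ⬝ᵥ covVec ν X O := by
    rw [covariance_fun_sum_left (X := fun k ω => X ω k * γ k) hXγ hO, dotProduct_comm]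
    simp only [covariance_mul_const_left, dotProduct, covVec, ecov_eq_covariance]
  have hLL : cov[fun ω => ∑ k, X ω k * γ k, fun ω => ∑ k, X ω k * γ k; ν]
      = γ ⬝ᵥ covMat ν X *ᵥ γ := by
    rw [covariance_fun_sum_fun_sum (X := fun k ω => X ω k * γ k)
      (Y := fun k ω => X ω k * γ k) hXγ hXγ]
    simp only [covariance_mul_const_right, covariance_mul_const_left, dotProduct, mulVec, covMat,
      of_apply, ecov_eq_covariance, Finset.mul_sum]
    exact Finset.sum_congr rfl fun k _ => Finset.sum_congr rfl fun l _ => by ring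
  rw [evar_eq_covariance, evar_eq_covariance, covariance_fun_sub_fun_sub hO hL hO hL,
    covariance_comm (Y := fun ω => ∑ k, X ω k * γ k), hLO, hLL]
  ring

end Covariance

lemma sum_mul_evar_sub_sum_mul {Ω ι : Type*} [MeasurableSpace Ω] [Fintype ι] {d : ℕ}
    (ν : ι → Measure Ω) [∀ z, IsFiniteMeasure (ν z)] (w : ι → ℝ) (X : Ω → Fin d → ℝ)
    (O : ι → Ω → ℝ) (hX : ∀ z k, MemLp (fun ω => X ω k) 2 (ν z)) (hO : ∀ z, MemLp (O z) 2 (ν z))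
    (A : Matrix (Fin d) (Fin d) ℝ) (hA : A = ∑ z, w z • covMat (ν z) X)
    (γ : Fin d → ℝ) (hγ : A *ᵥ γ = ∑ z, w z • covVec (ν z) X (O z)) :
    ∑ z, w z * evar (ν z) (fun ω => O z ω - ∑ k, X ω k * γ k)
      = ∑ z, w z * evar (ν z) (O z) - γ ⬝ᵥ A *ᵥ γ := by
  have hcov : γ ⬝ᵥ A *ᵥ γ = ∑ z, w z * (γ ⬝ᵥ covVec (ν z) X (O z)) := by
    simp only [hγ, dotProduct_sum, dotProduct_smul, smul_eq_mul]
  have hvar : γ ⬝ᵥ A *ᵥ γ = ∑ z, w z * (γ ⬝ᵥ covMat (ν z) X *ᵥ γ) := by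
    simp only [hA, sum_mulVec, smul_mulVec, dotProduct_sum, dotProduct_smul, smul_eq_mul]
  simp only [fun z => evar_sub_sum_mul (O z) X γ (hO z) (hX z), mul_add, mul_sub,
    Finset.sum_add_distrib, Finset.sum_sub_distrib, mul_left_comm _ (2 : ℝ), ← Finset.mul_sum]
  linarith

lemma Matrix.IsSymm.dotProduct_mulVec_comm {n R : Type*} [Fintype n] [CommSemiring R]
    {A : Matrix n n R} (hA : A.IsSymm) (u v : n → R) : u ⬝ᵥ A *ᵥ v = v ⬝ᵥ A *ᵥ u := by
  rw [dotProduct_mulVec, ← mulVec_transpose, hA.eq, dotProduct_comm]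

lemma Matrix.IsSymm.dotProduct_mulVec_smul_sub_smul {n R : Type*} [Fintype n] [CommRing R]
    {A : Matrix n n R} (hA : A.IsSymm) (t : R) (u v : n → R) :
    (t • u - (1 - t) • v) ⬝ᵥ A *ᵥ (t • u - (1 - t) • v)
      = t * (u ⬝ᵥ A *ᵥ u) + (1 - t) * (v ⬝ᵥ A *ᵥ v)
        - t * (1 - t) * ((u + v) ⬝ᵥ A *ᵥ (u + v)) := by
  simp only [mulVec_add, mulVec_sub, mulVec_smul, dotProduct_add, add_dotProduct,
    dotProduct_sub, sub_dotProduct, dotProduct_smul, smul_dotProduct, smul_eq_mul,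
    hA.dotProduct_mulVec_comm v u]
  ring

theorem stmt14_general {Ω ι : Type*} [MeasurableSpace Ω] [Fintype ι]
    (μ : Measure Ω) {d : ℕ}
    (X : Ω → Fin d → ℝ) (O₁ O₀ : ι → Ω → ℝ) (Z : Ω → ι)
    (hX : MemLp X 2 μ) (hO₁ : ∀ z, MemLp (O₁ z) 2 μ) (hO₀ : ∀ z, MemLp (O₀ z) 2 μ)
    (π : ℝ) (hπ : 0 < π) (hπ1 : π < 1)
    (A : Matrix (Fin d) (Fin d) ℝ)
    (hA : A = ∑ z, (μ (Z ⁻¹' {z})).toReal • covMat (μ[|Z ⁻¹' {z}]) X)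
    (hApos : A.PosDef)
    (γ₁ γ₀ : Fin d → ℝ)
    (hγ₁ : γ₁ = A⁻¹.mulVec (∑ z, (μ (Z ⁻¹' {z})).toReal • covVec (μ[|Z ⁻¹' {z}]) X (O₁ z)))
    (hγ₀ : γ₀ = A⁻¹.mulVec (∑ z, (μ (Z ⁻¹' {z})).toReal • covVec (μ[|Z ⁻¹' {z}]) X (O₀ z)))
    (σSL2 σCSL2 : ℝ)
    (hσSL2 : σSL2 = ∑ z, (μ (Z ⁻¹' {z})).toReal *
      (π * evar (μ[|Z ⁻¹' {z}]) (O₁ z) + (1 - π) * evar (μ[|Z ⁻¹' {z}]) (O₀ z)))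
    (hσCSL2 : σCSL2 = σSL2
      - π * (1 - π) * ((γ₁ + γ₀) ⬝ᵥ A.mulVec (γ₁ + γ₀))) :
    σCSL2 ≤ σSL2 ∧ (σCSL2 = σSL2 ↔ γ₁ + γ₀ = 0) ∧
    σCSL2 = (∑ z, (μ (Z ⁻¹' {z})).toReal *
        (π * evar (μ[|Z ⁻¹' {z}]) (fun ω => O₁ z ω - ∑ k, X ω k * γ₁ k)
          + (1 - π) * evar (μ[|Z ⁻¹' {z}]) (fun ω => O₀ z ω - ∑ k, X ω k * γ₀ k)))
      + (π • γ₁ - (1 - π) • γ₀) ⬝ᵥ A.mulVec (π • γ₁ - (1 - π) • γ₀) := by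
  have hXz : ∀ z k, MemLp (fun ω => X ω k) 2 μ[|Z ⁻¹' {z}] := fun z k => (hX.cond _).eval k
  have hA_mulVec_inv : ∀ c, A *ᵥ (A⁻¹ *ᵥ c) = c := fun c => by
    rw [mulVec_mulVec, mul_nonsing_inv _ ((isUnit_iff_isUnit_det A).mp hApos.isUnit),
      one_mulVec]
  have hres₁ := sum_mul_evar_sub_sum_mul _ _ X O₁ hXz (fun z => (hO₁ z).cond _) A hA γ₁
    (hγ₁ ▸ hA_mulVec_inv _)
  have hres₀ := sum_mul_evar_sub_sum_mul _ _ X O₀ hXz (fun z => (hO₀ z).cond _) A hA γ₀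
    (hγ₀ ▸ hA_mulVec_inv _)
  have hsplit : ∀ w a b : ι → ℝ, ∑ z, w z * (π * a z + (1 - π) * b z)
      = π * ∑ z, w z * a z + (1 - π) * ∑ z, w z * b z := fun w a b => by
    simp only [Finset.mul_sum, ← Finset.sum_add_distrib]
    exact Finset.sum_congr rfl fun z _ => by ring
  have hweight : 0 < π * (1 - π) := mul_pos hπ (sub_pos.mpr hπ1)
  have hq : 0 ≤ (γ₁ + γ₀) ⬝ᵥ A *ᵥ (γ₁ + γ₀) := hApos.posSemidef.dotProduct_mulVec_nonneg _
  have hq0 : (γ₁ + γ₀) ⬝ᵥ A *ᵥ (γ₁ + γ₀) = 0 ↔ γ₁ + γ₀ = 0 :=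
    ⟨fun h => by_contra fun hne => (hApos.dotProduct_mulVec_pos hne).ne' (by simpa using h),
      fun h => by simp [h]⟩
  refine ⟨by nlinarith, ?_, ?_⟩
  · rw [hσCSL2, sub_eq_self, mul_eq_zero, or_iff_right hweight.ne', hq0]
  · rw [hsplit, hres₁, hres₀, hσCSL2, hσSL2, hsplit,
      (isHermitian_iff_isSymm.mp hApos.isHermitian).dotProduct_mulVec_smul_sub_smul]
    ring

/-- guaranteed efficiency gain of the covariate-adjusted stratified
log-rank test: `σ²_CSL ≤ σ²_SL` with equality iff `γ₁+γ₀ = 0`, together with the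
within-stratum decomposition of `σ²_CSL`. -/
theorem stmt14 {Ω ι : Type*} [MeasurableSpace Ω] [MeasurableSpace ι]
    [MeasurableSingletonClass ι] [Fintype ι]
    (μ : Measure Ω) [IsProbabilityMeasure μ] {d : ℕ}
    (X : Ω → Fin d → ℝ) (O₁ O₀ : ι → Ω → ℝ) (Z : Ω → ι)
    (hX : MemLp X 2 μ) (hO₁ : ∀ z, MemLp (O₁ z) 2 μ) (hO₀ : ∀ z, MemLp (O₀ z) 2 μ)
    (hZ : Measurable Z) (hpos : ∀ z, 0 < μ (Z ⁻¹' {z}))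
    (π : ℝ) (hπ : 0 < π) (hπ1 : π < 1)
    (A : Matrix (Fin d) (Fin d) ℝ)
    (hA : A = ∑ z, (μ (Z ⁻¹' {z})).toReal • covMat (μ[|Z ⁻¹' {z}]) X)
    (hApos : A.PosDef)
    (γ₁ γ₀ : Fin d → ℝ)
    (hγ₁ : γ₁ = A⁻¹.mulVec (∑ z, (μ (Z ⁻¹' {z})).toReal • covVec (μ[|Z ⁻¹' {z}]) X (O₁ z)))
    (hγ₀ : γ₀ = A⁻¹.mulVec (∑ z, (μ (Z ⁻¹' {z})).toReal • covVec (μ[|Z ⁻¹' {z}]) X (O₀ z)))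
    (σSL2 σCSL2 : ℝ)
    (hσSL2 : σSL2 = ∑ z, (μ (Z ⁻¹' {z})).toReal *
      (π * evar (μ[|Z ⁻¹' {z}]) (O₁ z) + (1 - π) * evar (μ[|Z ⁻¹' {z}]) (O₀ z)))
    (hσCSL2 : σCSL2 = σSL2
      - π * (1 - π) * ((γ₁ + γ₀) ⬝ᵥ A.mulVec (γ₁ + γ₀))) :
    σCSL2 ≤ σSL2 ∧ (σCSL2 = σSL2 ↔ γ₁ + γ₀ = 0) ∧
    σCSL2 = (∑ z, (μ (Z ⁻¹' {z})).toReal *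
        (π * evar (μ[|Z ⁻¹' {z}]) (fun ω => O₁ z ω - ∑ k, X ω k * γ₁ k)
          + (1 - π) * evar (μ[|Z ⁻¹' {z}]) (fun ω => O₀ z ω - ∑ k, X ω k * γ₀ k)))
      + (π • γ₁ - (1 - π) • γ₀) ⬝ᵥ A.mulVec (π • γ₁ - (1 - π) • γ₀) :=
  stmt14_general μ X O₁ O₀ Z hX hO₁ hO₀ π hπ hπ1 A hA hApos γ₁ γ₀ hγ₁ hγ₀ σSL2 σCSL2 hσSL2 hσCSL2
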